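/- arXiv:2103.02053 — 4 statements merged into one kernel-verified Lean document; each statement's English description precedes it below -/
import Mathlib

section
/- Let u_n(z) = z^n (d^n/dz^n) ₂F₁(α, β; γ; z). Then u_n satisfies the second-order differential equation u_n'' + ((γ-n)/z + (δ+n)/(z-1)) u_n' + (n(1-γ)/z² + (αβ + n(α+β-δ))/(z(z-1))) u_n = 0, where δ = α + β + 1 - γ. -/
open PowerSeries

/-!
With the Euler operator `θ = z d/dz`, the equation reads `z (θ + α)(θ + β) u = (θ - n)(θ + γ - 1) u`,
which on coefficients is the two-term recurrence `(α + m)(β + m) cₘ = (γ + m)(m + 1 - n) cₘ₊₁`.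
The coefficients of `₂F₁(α, β; γ; z)` satisfy it for `n = 0`; differentiating shifts the
parameters `(α, β, γ)` by one, and multiplying by `zⁿ` shifts the index by `n`.
-/

/-- The Pochhammer symbol `(a)_k = a(a+1)⋯(a+k-1)`. -/
noncomputable def poch (a : ℂ) (k : ℕ) : ℂ := (ascPochhammer ℂ k).eval a

/-- The Gauss hypergeometric series `₂F₁(α, β; γ; z)` as a formal power series. -/
noncomputable def gauss (α β γ : ℂ) : PowerSeries ℂ :=
  PowerSeries.mk fun k => poch α k * poch β k / (poch γ k * (k.factorial : ℂ))

/-- `u_n(z) = z^n (dⁿ/dzⁿ) ₂F₁(α, β; γ; z)` as a formal power series. -/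
noncomputable def gaussU (α β γ : ℂ) (n : ℕ) : PowerSeries ℂ :=
  X ^ n * (fun f => derivative ℂ f)^[n] (gauss α β γ)

namespace PowerSeries

variable {R : Type*} [CommRing R]

noncomputable def eulerOp (f : R⟦X⟧) : R⟦X⟧ := X * derivative R f

local notation "θ" => eulerOp

theorem coeff_eulerOp (f : R⟦X⟧) (m : ℕ) : coeff m (θ f) = m * coeff m f := by
  cases m with
  | zero => simp [eulerOp]
  | succ m =>
    rw [eulerOp, coeff_succ_X_mul, coeff_derivative, mul_comm]
    push_cast
    ring

theorem eulerOp_eulerOp (f : R⟦X⟧) :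
    θ (θ f) = X ^ 2 * derivative R (derivative R f) + θ f := by
  simp only [eulerOp, Derivation.leibniz, derivative_X, smul_eq_mul]
  ring

theorem coeff_eulerOp_quadratic (a b : R) (f : R⟦X⟧) (m : ℕ) :
    coeff m (θ (θ f) + C (a + b) * θ f + C (a * b) * f) = (m + a) * (m + b) * coeff m f := by
  simp only [map_add, add_mul, coeff_C_mul, coeff_eulerOp]
  ring

theorem X_mul_eulerOp_quadratic_eq (a b p q : R) (f : R⟦X⟧) (h₀ : p * q * coeff 0 f = 0)
    (hrec : ∀ m : ℕ, (m + a) * (m + b) * coeff m f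
      = (m + 1 + p) * (m + 1 + q) * coeff (m + 1) f) :
    X * (θ (θ f) + C (a + b) * θ f + C (a * b) * f)
      = θ (θ f) + C (p + q) * θ f + C (p * q) * f := by
  ext m
  rw [coeff_eulerOp_quadratic]
  cases m with
  | zero => simpa using h₀.symm
  | succ m =>
    rw [coeff_succ_X_mul, coeff_eulerOp_quadratic, hrec]
    push_cast
    ring

end PowerSeries

section HypergeometricRecurrence

variable {R : Type*} [CommRing R]

/-- The recurrence satisfied by the coefficients `(a)ₖ (b)ₖ / ((c)ₖ k!)` of `₂F₁(a, b; c; z)`. -/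
def HypergeometricRecurrence (a b c : R) (f : R⟦X⟧) : Prop :=
  ∀ k : ℕ, (a + k) * (b + k) * coeff k f = (c + k) * (k + 1) * coeff (k + 1) f

theorem HypergeometricRecurrence.derivative {a b c : R} {f : R⟦X⟧}
    (hf : HypergeometricRecurrence a b c f) :
    HypergeometricRecurrence (a + 1) (b + 1) (c + 1) (PowerSeries.derivative R f) := by
  intro k
  have hk := hf (k + 1)
  simp only [coeff_derivative]
  push_cast at hk ⊢
  linear_combination ((k : R) + 1) * hk

theorem HypergeometricRecurrence.iterate_derivative {a b c : R} {f : R⟦X⟧}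
    (hf : HypergeometricRecurrence a b c f) (n : ℕ) :
    HypergeometricRecurrence (a + n) (b + n) (c + n)
      ((fun f => PowerSeries.derivative R f)^[n] f) := by
  induction n with
  | zero => simpa using hf
  | succ n ih =>
    rw [Function.iterate_succ_apply']
    simpa only [Nat.cast_succ, add_assoc] using ih.derivative

theorem HypergeometricRecurrence.X_pow_mul {a b c : R} {g : R⟦X⟧} {n : ℕ}
    (hg : HypergeometricRecurrence (a + n) (b + n) (c + n) g) (m : ℕ) :
    (a + m) * (b + m) * coeff m (X ^ n * g)
      = (c + m) * (m + 1 - n) * coeff (m + 1) (X ^ n * g) := by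
  rcases le_or_gt n m with hnm | hmn
  · obtain ⟨k, rfl⟩ := Nat.exists_eq_add_of_le hnm
    rw [coeff_X_pow_mul', coeff_X_pow_mul', if_pos hnm, if_pos (by omega),
      Nat.add_sub_cancel_left, show n + k + 1 - n = k + 1 by omega]
    push_cast
    linear_combination hg k
  · rcases (Nat.succ_le_of_lt hmn).eq_or_lt with rfl | hmn'
    · rw [coeff_X_pow_mul', if_neg (by omega)]
      push_cast
      ring
    · rw [coeff_X_pow_mul', coeff_X_pow_mul', if_neg (by omega), if_neg (by omega)]
      ring

end HypergeometricRecurrence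

theorem gauss_hypergeometricRecurrence (α β : ℂ) {γ : ℂ} (hγ : ∀ m : ℕ, γ ≠ -(m : ℂ)) :
    HypergeometricRecurrence α β γ (gauss α β γ) := by
  intro k
  have hγk : γ + k ≠ 0 := fun h => hγ k (eq_neg_of_add_eq_zero_left h)
  simp only [gauss, coeff_mk, poch, ascPochhammer_succ_eval, Nat.factorial_succ]
  rcases eq_or_ne ((ascPochhammer ℂ k).eval γ) 0 with h | h
  · simp [h]
  · push_cast
    field_simp

/-- With `δ = α+β+1-γ`, each `u_n` satisfies
`u_n'' + ((γ-n)/z + (δ+n)/(z-1)) u_n' + (n(1-γ)/z² + (αβ + n(α+β-δ))/(z(z-1))) u_n = 0`,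
stated in the cleared-denominator form
`z²(z-1) u_n'' + z((γ-n)(z-1) + (δ+n)z) u_n' + (n(1-γ)(z-1) + (αβ + n(α+β-δ))z) u_n = 0`. -/
theorem gaussU_ode (α β γ δ : ℂ) (hδ : δ = α + β + 1 - γ)
    (hγ : ∀ m : ℕ, γ ≠ -(m : ℂ)) (n : ℕ) :
    X ^ 2 * (X - 1) * derivative ℂ (derivative ℂ (gaussU α β γ n))
      + X * (C (γ - n) * (X - 1) + C (δ + n) * X) * derivative ℂ (gaussU α β γ n)
      + (C (n * (1 - γ)) * (X - 1) + C (α * β + n * (α + β - δ)) * X)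
          * gaussU α β γ n = 0 := by
  subst hδ
  set u := gaussU α β γ n
  have hrec : ∀ m : ℕ, (α + m) * (β + m) * coeff m u = (γ + m) * (m + 1 - n) * coeff (m + 1) u :=
    ((gauss_hypergeometricRecurrence α β hγ).iterate_derivative n).X_pow_mul
  have h₀ : -(n : ℂ) * (γ - 1) * coeff 0 u = 0 := by
    cases n with
    | zero => simp
    | succ n => simp [u, gaussU, pow_succ', mul_assoc]
  have hode := X_mul_eulerOp_quadratic_eq α β (-n) (γ - 1) u h₀
    fun m => by linear_combination hrec m
  rw [eulerOp_eulerOp, eulerOp] at hode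
  simp only [map_add, map_sub, map_mul, map_neg, map_natCast, map_one] at hode ⊢
  linear_combination hode
end

section
/- Let u_n(z) = z^n (d^n/dz^n) ₁F₁(α; γ; -εz). Then the three-term recurrence εz(α+n-1) u_{n-1}(z) + (γ + n - 1 + εz) u_n(z) + u_{n+1}(z) = 0 holds for all n ≥ 1, as an identity of formal power series. -/
open PowerSeries

/-- The Kummer series `₁F₁(α; γ; -εz)` as a formal power series in `z`. -/
noncomputable def kummerNeg (α γ ε : ℂ) : PowerSeries ℂ :=
  PowerSeries.mk fun k => poch α k * (-ε) ^ k / (poch γ k * (k.factorial : ℂ))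

/-- `u_n(z) = z^n (dⁿ/dzⁿ) ₁F₁(α; γ; -εz)` as a formal power series. -/
noncomputable def kummerU (α γ ε : ℂ) (n : ℕ) : PowerSeries ℂ :=
  X ^ n * (fun f => derivative ℂ f)^[n] (kummerNeg α γ ε)

/-!
The Kummer series solves `z F'' + (γ + εz) F' + εα F = 0`, which on coefficients is the ratio
`(k+1)(γ+k) a_{k+1} = -ε(α+k) a_k` of consecutive terms. Differentiating this equation shifts
`(α, γ)` to `(α + 1, γ + 1)`, so `F^{(n-1)}` solves it with parameters `(α + n - 1, γ + n - 1)`;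
multiplying that equation by `z^n` is exactly the recurrence for `u_{n-1}, u_n, u_{n+1}`.
-/

def PowerSeries.IsKummerSolution {R : Type*} [CommRing R] (α γ ε : R) (f : R⟦X⟧) : Prop :=
  X * derivative R (derivative R f) + (C γ + C ε * X) * derivative R f + C (ε * α) * f = 0

namespace PowerSeries.IsKummerSolution

variable {R : Type*} [CommRing R] {α γ ε : R} {f : R⟦X⟧}

theorem derivative (hf : IsKummerSolution α γ ε f) :
    IsKummerSolution (α + 1) (γ + 1) ε (derivative R f) := by
  have h := congrArg (PowerSeries.derivative R) hf
  simp only [map_add, Derivation.leibniz, derivative_C, derivative_X, smul_eq_mul, map_zero,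
    map_mul] at h
  unfold IsKummerSolution
  simp only [map_add, map_mul, map_one]
  linear_combination h

theorem iterate_derivative (hf : IsKummerSolution α γ ε f) (n : ℕ) :
    IsKummerSolution (α + n) (γ + n) ε ((fun g => PowerSeries.derivative R g)^[n] f) := by
  induction n with
  | zero => simpa using hf
  | succ n ih =>
    rw [Function.iterate_succ_apply']
    simpa [add_assoc] using ih.derivative

end PowerSeries.IsKummerSolution

theorem poch_succ (a : ℂ) (k : ℕ) : poch a (k + 1) = poch a k * (a + k) := by
  simp [poch, ascPochhammer_succ_eval]

theorem poch_ne_zero {γ : ℂ} (hγ : ∀ m : ℕ, γ ≠ -(m : ℂ)) (k : ℕ) : poch γ k ≠ 0 := by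
  induction k with
  | zero => simp [poch]
  | succ k ih =>
    rw [poch_succ]
    exact mul_ne_zero ih fun h => hγ k (by linear_combination h)

theorem coeff_kummerNeg_succ (α γ ε : ℂ) (hγ : ∀ m : ℕ, γ ≠ -(m : ℂ)) (k : ℕ) :
    (k + 1) * (γ + k) * coeff (k + 1) (kummerNeg α γ ε)
      = -ε * (α + k) * coeff k (kummerNeg α γ ε) := by
  have hpoch : poch γ k ≠ 0 := poch_ne_zero hγ k
  have hγk : γ + k ≠ 0 := fun h => hγ k (by linear_combination h)
  have hfact : (k.factorial : ℂ) ≠ 0 := Nat.cast_ne_zero.2 k.factorial_ne_zero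
  have hk : (k : ℂ) + 1 ≠ 0 := by exact_mod_cast k.succ_ne_zero
  simp only [kummerNeg, coeff_mk, poch_succ, Nat.factorial_succ]
  push_cast
  field_simp
  ring

theorem isKummerSolution_kummerNeg (α γ ε : ℂ) (hγ : ∀ m : ℕ, γ ≠ -(m : ℂ)) :
    IsKummerSolution α γ ε (kummerNeg α γ ε) := by
  ext k
  have hrec := coeff_kummerNeg_succ α γ ε hγ k
  rcases k with _ | k <;>
  · simp only [map_add, add_mul, coeff_C_mul, mul_assoc, coeff_zero_X_mul, coeff_succ_X_mul,
      coeff_derivative, map_zero]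
    push_cast at hrec ⊢
    linear_combination hrec

theorem kummerU_three_term_recurrence_general (α γ ε : ℂ) (hγ : ∀ m : ℕ, γ ≠ -(m : ℂ))
    (n : ℕ) (hn : 1 ≤ n) :
    C ε * X * C (α + n - 1) * kummerU α γ ε (n - 1)
      + (C (γ + n - 1) + C ε * X) * kummerU α γ ε n
      + kummerU α γ ε (n + 1) = 0 := by
  obtain ⟨j, rfl⟩ : ∃ j, n = j + 1 := ⟨n - 1, by omega⟩
  have hode := (isKummerSolution_kummerNeg α γ ε hγ).iterate_derivative j
  have hα : α + ((j + 1 : ℕ) : ℂ) - 1 = α + j := by push_cast; ring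
  have hγ' : γ + ((j + 1 : ℕ) : ℂ) - 1 = γ + j := by push_cast; ring
  simp only [IsKummerSolution, map_mul] at hode
  simp only [kummerU, Nat.add_sub_cancel, hα, hγ', Function.iterate_succ_apply']
  linear_combination X ^ (j + 1) * hode

/-- For all `n ≥ 1`, the three-term recurrence
`εz(α+n-1) u_{n-1} + (γ + n - 1 + εz) u_n + u_{n+1} = 0` holds as an identity of
formal power series. -/
theorem kummerU_three_term_recurrence (α γ ε : ℂ) (hγ : ∀ m : ℕ, γ ≠ -(m : ℂ))
    (hε : ε ≠ 0) (n : ℕ) (hn : 1 ≤ n) :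
    C ε * X * C (α + n - 1) * kummerU α γ ε (n - 1)
      + (C (γ + n - 1) + C ε * X) * kummerU α γ ε n
      + kummerU α γ ε (n + 1) = 0 :=
  kummerU_three_term_recurrence_general α γ ε hγ n hn
end

section
/- With recurrence coefficients R_n = εn(n+α-1), Q_n = n(n+ε+γ+δ-1) + εα - q, P_n = n+δ and d₀ = 1, the finite-sum termination conditions for N = 1 are: δ = -1 and (q-εα)² - (ε+γ-1)(q-εα) + εα = 0. That is, if δ = -1 and q satisfies this quadratic, and d₁ = -Q₀/R₁ = (q-εα)/(εα), then P₁ = 0 and Q₁ d₁ + P₀ d₀ = 0, so d_n = 0 for all n ≥ 2. -/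
/-! When `δ = -1`, `εα · (Q₁d₁ + P₀d₀)` is minus the quadratic in `q - εα`.
Since the leading coefficients `R_n` do not vanish, the recurrence then forces `d₂ = 0`, and
`d₃ = 0` because `P₁ = 0`; two consecutive zeros of a three-term recurrence kill the whole tail. -/

section ThreeTermRecurrence

variable {K : Type*} [CommRing K] [NoZeroDivisors K] {R Q P d : ℕ → K}

theorem eq_zero_of_threeTermRecurrence (hR : ∀ n, 2 ≤ n → R n ≠ 0)
    (hrec : ∀ n, 2 ≤ n → R n * d n + Q (n - 1) * d (n - 1) + P (n - 2) * d (n - 2) = 0)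
    {n : ℕ} (hn : 2 ≤ n) (hlower : Q (n - 1) * d (n - 1) + P (n - 2) * d (n - 2) = 0) :
    d n = 0 := by
  have hlead : R n * d n = 0 := by linear_combination hrec n hn - hlower
  exact (mul_eq_zero.mp hlead).resolve_left (hR n hn)

theorem eq_zero_of_le_of_consecutive_eq_zero (hR : ∀ n, 2 ≤ n → R n ≠ 0)
    (hrec : ∀ n, 2 ≤ n → R n * d n + Q (n - 1) * d (n - 1) + P (n - 2) * d (n - 2) = 0)
    {m : ℕ} (hm : d m = 0) (hm' : d (m + 1) = 0) : ∀ n, m ≤ n → d n = 0 := by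
  have hpair : ∀ k, d (m + k) = 0 ∧ d (m + k + 1) = 0 := by
    intro k
    induction k with
    | zero => exact ⟨hm, hm'⟩
    | succ k ih =>
      refine ⟨ih.2, eq_zero_of_threeTermRecurrence hR hrec (n := m + k + 2) (by omega) ?_⟩
      simp only [show m + k + 2 - 1 = m + k + 1 by omega, show m + k + 2 - 2 = m + k by omega,
        ih.1, ih.2, mul_zero, add_zero]
  intro n hn
  obtain ⟨k, rfl⟩ := Nat.exists_eq_add_of_le hn
  exact (hpair k).1

end ThreeTermRecurrence

theorem confluent_heun_N1_termination_general
    (q α γ δ ε : ℂ) (hε : ε ≠ 0) (hα : α ≠ 0)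
    (R Q P d : ℕ → ℂ)
    (hQ : ∀ n : ℕ, Q n = n * (n + ε + γ + δ - 1) + ε * α - q)
    (hP : ∀ n : ℕ, P n = n + δ)
    (hRne : ∀ n : ℕ, 1 ≤ n → R n ≠ 0)
    (hδ : δ = -1)
    (hquad : (q - ε * α) ^ 2 - (ε + γ - 1) * (q - ε * α) + ε * α = 0)
    (hd0 : d 0 = 1) (hd1 : d 1 = (q - ε * α) / (ε * α))
    (hrec : ∀ n : ℕ, 2 ≤ n →
      R n * d n + Q (n - 1) * d (n - 1) + P (n - 2) * d (n - 2) = 0) :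
    P 1 = 0 ∧ Q 1 * d 1 + P 0 * d 0 = 0 ∧ ∀ n : ℕ, 2 ≤ n → d n = 0 := by
  have hP1 : P 1 = 0 := by rw [hP, hδ]; norm_num
  have hQd : Q 1 * d 1 + P 0 * d 0 = 0 := by
    rw [hQ, hP, hd0, hd1, hδ]
    push_cast
    field_simp
    linear_combination -hquad
  have hR : ∀ n, 2 ≤ n → R n ≠ 0 := fun n hn => hRne n (by omega)
  have hd2 : d 2 = 0 := eq_zero_of_threeTermRecurrence hR hrec le_rfl hQd
  have hd3 : d 3 = 0 :=
    eq_zero_of_threeTermRecurrence hR hrec (n := 3) (by norm_num) (by simp [hd2, hP1])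
  exact ⟨hP1, hQd, eq_zero_of_le_of_consecutive_eq_zero hR hrec hd2 hd3⟩

/-- For the single-confluent Heun recurrence with
`R_n = εn(n+α-1)`, `Q_n = n(n+ε+γ+δ-1) + εα - q`, `P_n = n+δ`, `d₀ = 1` and
`d₁ = -Q₀/R₁ = (q-εα)/(εα)`: if `δ = -1` and `q` satisfies the quadratic
`(q-εα)² - (ε+γ-1)(q-εα) + εα = 0`, then `P₁ = 0` and `Q₁d₁ + P₀d₀ = 0`, and hence
`d_n = 0` for all `n ≥ 2`. -/
theorem confluent_heun_N1_termination
    (q α γ δ ε : ℂ) (hε : ε ≠ 0) (hα : α ≠ 0)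
    (R Q P d : ℕ → ℂ)
    (hR : ∀ n : ℕ, R n = ε * n * (n + α - 1))
    (hQ : ∀ n : ℕ, Q n = n * (n + ε + γ + δ - 1) + ε * α - q)
    (hP : ∀ n : ℕ, P n = n + δ)
    (hRne : ∀ n : ℕ, 1 ≤ n → R n ≠ 0)
    (hδ : δ = -1)
    (hquad : (q - ε * α) ^ 2 - (ε + γ - 1) * (q - ε * α) + ε * α = 0)
    (hd0 : d 0 = 1) (hd1 : d 1 = (q - ε * α) / (ε * α))
    (hrec : ∀ n : ℕ, 2 ≤ n →
      R n * d n + Q (n - 1) * d (n - 1) + P (n - 2) * d (n - 2) = 0) :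
    P 1 = 0 ∧ Q 1 * d 1 + P 0 * d 0 = 0 ∧ ∀ n : ℕ, 2 ≤ n → d n = 0 :=
  confluent_heun_N1_termination_general q α γ δ ε hε hα R Q P d hQ hP hRne hδ hquad hd0 hd1 hrec
end

section
/- With recurrence coefficients R_n = an(n+α-1)(n+β-1), Q_n = a(n+α)(n+β) + (a-1)n(n+ε-1) - γn - q, P_n = (a-1)(n+ε) and d₀ = 1, the termination conditions for N = 1 are: ε = -1 and q² - (1 - γ + a(2αβ + α + β))q + aαβ(-γ + a(α+1)(β+1)) = 0. -/
/-!
With `ε = -1` the coefficient `P₁ = (a-1)(1+ε)` vanishes, and clearing the denominator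
`R₁ = aαβ` of `d₁` turns `Q₁d₁ + P₀d₀` into the quadratic in `q`. The recurrence at `n = 2, 3`
then gives `R₂d₂ = 0` and `R₃d₃ = -P₁d₁ = 0`, and two consecutive zeros propagate through a
three-term recurrence whose leading coefficients `R_n` do not vanish.
-/

section ThreeTermRecurrence

variable {K : Type*} [Ring K] [NoZeroDivisors K] {R Q P d : ℕ → K}

theorem eq_zero_of_threeTerm_step {n : ℕ} (hR : R (n + 2) ≠ 0)
    (hrec : R (n + 2) * d (n + 2) + Q (n + 1) * d (n + 1) + P n * d n = 0)
    (hlow : Q (n + 1) * d (n + 1) + P n * d n = 0) : d (n + 2) = 0 := by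
  refine (mul_eq_zero.mp ?_).resolve_left hR
  rw [add_assoc, hlow, add_zero] at hrec
  exact hrec

theorem eq_zero_of_threeTerm_of_consecutive_zeros (hR : ∀ n, R (n + 2) ≠ 0)
    (hrec : ∀ n, R (n + 2) * d (n + 2) + Q (n + 1) * d (n + 1) + P n * d n = 0)
    {m : ℕ} (h₀ : d m = 0) (h₁ : d (m + 1) = 0) : ∀ n, m ≤ n → d n = 0 := by
  have hpair : ∀ k, d (m + k) = 0 ∧ d (m + k + 1) = 0 := by
    intro k
    induction k with
    | zero => exact ⟨h₀, h₁⟩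
    | succ k ih =>
      have hlow : Q (m + k + 1) * d (m + k + 1) + P (m + k) * d (m + k) = 0 := by
        rw [ih.1, ih.2, mul_zero, mul_zero, add_zero]
      exact ⟨ih.2, eq_zero_of_threeTerm_step (hR (m + k)) (hrec (m + k)) hlow⟩
  intro n hn
  obtain ⟨k, rfl⟩ := Nat.exists_eq_add_of_le hn
  exact (hpair k).1

end ThreeTermRecurrence

theorem heun_N1_termination_general
    (a q α β γ ε : ℂ)
    (R Q P d : ℕ → ℂ)
    (hR : ∀ n : ℕ, R n = a * n * (n + α - 1) * (n + β - 1))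
    (hQ : ∀ n : ℕ, Q n = a * (n + α) * (n + β) + (a - 1) * n * (n + ε - 1) - γ * n - q)
    (hP : ∀ n : ℕ, P n = (a - 1) * (n + ε))
    (hRne : ∀ n : ℕ, 1 ≤ n → R n ≠ 0)
    (hε : ε = -1)
    (hquad : q ^ 2 - (1 - γ + a * (2 * α * β + α + β)) * q
      + a * α * β * (-γ + a * (α + 1) * (β + 1)) = 0)
    (hd0 : d 0 = 1) (hd1 : d 1 = (q - a * α * β) / (a * α * β))
    (hrec : ∀ n : ℕ, 2 ≤ n →
      R n * d n + Q (n - 1) * d (n - 1) + P (n - 2) * d (n - 2) = 0) :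
    P 1 = 0 ∧ Q 1 * d 1 + P 0 * d 0 = 0 ∧ ∀ n : ℕ, 2 ≤ n → d n = 0 := by
  obtain ⟨⟨ha, hα⟩, hβ⟩ : (a ≠ 0 ∧ α ≠ 0) ∧ β ≠ 0 := by
    simpa [hR] using hRne 1 le_rfl
  have hP₁ : P 1 = 0 := by rw [hP, hε]; push_cast; ring
  have hQ₁d₁ : Q 1 * d 1 + P 0 * d 0 = 0 := by
    rw [hQ, hP, hd0, hd1, hε]
    push_cast
    field_simp
    linear_combination -hquad
  have hR' : ∀ n, R (n + 2) ≠ 0 := fun n => hRne (n + 2) (by omega)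
  have hrec' : ∀ n, R (n + 2) * d (n + 2) + Q (n + 1) * d (n + 1) + P n * d n = 0 :=
    fun n => by simpa using hrec (n + 2) (by omega)
  have hd₂ : d 2 = 0 := eq_zero_of_threeTerm_step (hR' 0) (hrec' 0) hQ₁d₁
  have hd₃ : d 3 = 0 :=
    eq_zero_of_threeTerm_step (hR' 1) (hrec' 1) (by rw [hd₂, hP₁, mul_zero, zero_mul, add_zero])
  exact ⟨hP₁, hQ₁d₁, eq_zero_of_threeTerm_of_consecutive_zeros hR' hrec' hd₂ hd₃⟩

/-- For the general Heun recurrence with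
`R_n = an(n+α-1)(n+β-1)`, `Q_n = a(n+α)(n+β) + (a-1)n(n+ε-1) - γn - q`,
`P_n = (a-1)(n+ε)`, `d₀ = 1` and `d₁ = -Q₀/R₁ = (q-aαβ)/(aαβ)`: if `ε = -1` and `q`
satisfies the quadratic `q² - (1 - γ + a(2αβ+α+β))q + aαβ(-γ + a(α+1)(β+1)) = 0`,
then `P₁ = 0` and `Q₁d₁ + P₀d₀ = 0`, and hence `d_n = 0` for all `n ≥ 2`. -/
theorem heun_N1_termination
    (a q α β γ ε : ℂ) (ha0 : a ≠ 0) (ha1 : a ≠ 1) (hα : α ≠ 0) (hβ : β ≠ 0)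
    (R Q P d : ℕ → ℂ)
    (hR : ∀ n : ℕ, R n = a * n * (n + α - 1) * (n + β - 1))
    (hQ : ∀ n : ℕ, Q n = a * (n + α) * (n + β) + (a - 1) * n * (n + ε - 1) - γ * n - q)
    (hP : ∀ n : ℕ, P n = (a - 1) * (n + ε))
    (hRne : ∀ n : ℕ, 1 ≤ n → R n ≠ 0)
    (hε : ε = -1)
    (hquad : q ^ 2 - (1 - γ + a * (2 * α * β + α + β)) * q
      + a * α * β * (-γ + a * (α + 1) * (β + 1)) = 0)
    (hd0 : d 0 = 1) (hd1 : d 1 = (q - a * α * β) / (a * α * β))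
    (hrec : ∀ n : ℕ, 2 ≤ n →
      R n * d n + Q (n - 1) * d (n - 1) + P (n - 2) * d (n - 2) = 0) :
    P 1 = 0 ∧ Q 1 * d 1 + P 0 * d 0 = 0 ∧ ∀ n : ℕ, 2 ≤ n → d n = 0 :=
  heun_N1_termination_general a q α β γ ε R Q P d hR hQ hP hRne hε hquad hd0 hd1 hrec
end
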